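/- Let $A : \mathbb{R}^N \to \mathbb{R}^N$ be a function and let $u : \mathbb{R}^N \to \mathbb{C}$ be measurable. Then for all $\delta > 0$, $I_\delta(|u|) \le I_\delta^A(u)$. -/

import Mathlib

open MeasureTheory ENNReal

/-- The nonlocal functional `I_δ(v) = ∬_{|v(y)-v(x)|>δ} δ² / |x-y|^{N+2} dx dy`. -/
noncomputable def Idelta (N : ℕ) (v : EuclideanSpace ℝ (Fin N) → ℝ) (δ : ℝ) : ℝ≥0∞ :=
  ∫⁻ p in {p : EuclideanSpace ℝ (Fin N) × EuclideanSpace ℝ (Fin N) |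
      δ < |v p.2 - v p.1|},
    ENNReal.ofReal (δ ^ 2 / ‖p.1 - p.2‖ ^ (N + 2)) ∂(volume.prod volume)

/-- `Ψ_u(x,y) := e^{i (x-y)·A((x+y)/2)} u(y)`. -/
noncomputable def Psi {N : ℕ} (A : EuclideanSpace ℝ (Fin N) → EuclideanSpace ℝ (Fin N))
    (u : EuclideanSpace ℝ (Fin N) → ℂ) (x y : EuclideanSpace ℝ (Fin N)) : ℂ :=
  Complex.exp (((inner ℝ (x - y) (A ((2⁻¹ : ℝ) • (x + y))) : ℝ) : ℂ) * Complex.I) * u y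

/-- The magnetic nonlocal functional
`I_δ^A(u) = ∬_{|Ψ_u(x,y)-Ψ_u(x,x)|>δ} δ² / |x-y|^{N+2} dx dy`. -/
noncomputable def IdeltaA (N : ℕ) (A : EuclideanSpace ℝ (Fin N) → EuclideanSpace ℝ (Fin N))
    (u : EuclideanSpace ℝ (Fin N) → ℂ) (δ : ℝ) : ℝ≥0∞ :=
  ∫⁻ p in {p : EuclideanSpace ℝ (Fin N) × EuclideanSpace ℝ (Fin N) |
      δ < ‖Psi A u p.1 p.2 - Psi A u p.1 p.1‖},
    ENNReal.ofReal (δ ^ 2 / ‖p.1 - p.2‖ ^ (N + 2)) ∂(volume.prod volume)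

/-! The phase factor in `Psi` is unimodular, so `‖Psi A u x y‖ = ‖u y‖`; by the reverse
triangle inequality the domain of integration of `I_δ(|u|)` then lies inside that of
`I_δ^A(u)`, and the two integrands coincide. -/

section Psi

variable {N : ℕ} (A : EuclideanSpace ℝ (Fin N) → EuclideanSpace ℝ (Fin N))
  (u : EuclideanSpace ℝ (Fin N) → ℂ)

theorem norm_Psi (x y : EuclideanSpace ℝ (Fin N)) : ‖Psi A u x y‖ = ‖u y‖ := by
  simp [Psi, Complex.norm_exp_ofReal_mul_I]

theorem abs_norm_sub_norm_le_norm_Psi_sub (x y : EuclideanSpace ℝ (Fin N)) :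
    |‖u y‖ - ‖u x‖| ≤ ‖Psi A u x y - Psi A u x x‖ := by
  simpa only [norm_Psi] using abs_norm_sub_norm_le (Psi A u x y) (Psi A u x x)

end Psi

theorem Idelta_abs_le_IdeltaA_general (N : ℕ)
    (A : EuclideanSpace ℝ (Fin N) → EuclideanSpace ℝ (Fin N))
    (u : EuclideanSpace ℝ (Fin N) → ℂ) :
    ∀ δ : ℝ, 0 < δ →
      Idelta N (fun x => ‖u x‖) δ ≤ IdeltaA N A u δ :=
  fun _ _ => lintegral_mono_set fun p hp =>
    lt_of_lt_of_le hp (abs_norm_sub_norm_le_norm_Psi_sub A u p.1 p.2)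

/-- **Diamagnetic inequality for the nonlocal functionals:** `I_δ(|u|) ≤ I_δ^A(u)`
for all `δ > 0`. -/
theorem Idelta_abs_le_IdeltaA (N : ℕ)
    (A : EuclideanSpace ℝ (Fin N) → EuclideanSpace ℝ (Fin N))
    (u : EuclideanSpace ℝ (Fin N) → ℂ) (hu : Measurable u) :
    ∀ δ : ℝ, 0 < δ →
      Idelta N (fun x => ‖u x‖) δ ≤ IdeltaA N A u δ :=
  Idelta_abs_le_IdeltaA_general N A u
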